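/- arXiv:2004.00063 — 8 statements merged into one kernel-verified Lean document; each statement's English description precedes it below -/
import Mathlib

section
/- If u + iv = e^{iθ}/((1-α e^{iθ})(1-β e^{iθ})) with -1 ≤ α, β ≤ 1 and αβ ≠ ±1, then u and v satisfy the quartic equation (u + (α+β)(u²+v²))²/(1+αβ)² + v²/(1-αβ)² = (u²+v²)². -/
open Complex

theorem pascal_snail_quartic (α β θ : ℝ) (hα1 : -1 ≤ α) (hα2 : α ≤ 1)
    (hβ1 : -1 ≤ β) (hβ2 : β ≤ 1) (h1 : α * β ≠ 1) (h2 : α * β ≠ -1)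
    (hαz : (α : ℂ) * Complex.exp (θ * Complex.I) ≠ 1)
    (hβz : (β : ℂ) * Complex.exp (θ * Complex.I) ≠ 1)
    (u v : ℝ)
    (hu : u = (Complex.exp (θ * Complex.I) /
        ((1 - (α : ℂ) * Complex.exp (θ * Complex.I)) * (1 - (β : ℂ) * Complex.exp (θ * Complex.I)))).re)
    (hv : v = (Complex.exp (θ * Complex.I) /
        ((1 - (α : ℂ) * Complex.exp (θ * Complex.I)) * (1 - (β : ℂ) * Complex.exp (θ * Complex.I)))).im) :
    (u + (α + β) * (u ^ 2 + v ^ 2)) ^ 2 / (1 + α * β) ^ 2 + v ^ 2 / (1 - α * β) ^ 2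
      = (u ^ 2 + v ^ 2) ^ 2 := by
  set e : ℂ := Complex.exp (θ * Complex.I) with he
  have he0 : e ≠ 0 := Complex.exp_ne_zero _
  have hαd : (1 : ℂ) - (α : ℂ) * e ≠ 0 := by
    intro h; apply hαz; linear_combination -h
  have hβd : (1 : ℂ) - (β : ℂ) * e ≠ 0 := by
    intro h; apply hβz; linear_combination -h
  set w : ℂ := e / ((1 - (α : ℂ) * e) * (1 - (β : ℂ) * e)) with hwdef
  have hw0 : w ≠ 0 := div_ne_zero he0 (mul_ne_zero hαd hβd)
  have hinv : w⁻¹ = Complex.exp (-(θ * Complex.I)) - ((α : ℂ) + β) + (α : ℂ) * β * e := by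
    rw [hwdef]
    rw [Complex.exp_neg, ← he]
    field_simp
    ring
  have hneg : -((θ:ℂ) * Complex.I) = ((-θ : ℝ) : ℂ) * Complex.I := by push_cast; ring
  have hre : w⁻¹.re = (1 + α * β) * Real.cos θ - (α + β) := by
    rw [hinv, hneg]
    simp only [he, Complex.add_re, Complex.sub_re, Complex.mul_re, Complex.mul_im,
      Complex.add_im, Complex.sub_im, Complex.ofReal_re, Complex.ofReal_im,
      Complex.exp_ofReal_mul_I_re, Complex.exp_ofReal_mul_I_im, Real.cos_neg, Real.sin_neg]
    ring
  have him : w⁻¹.im = (α * β - 1) * Real.sin θ := by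
    rw [hinv, hneg]
    simp only [he, Complex.add_re, Complex.sub_re, Complex.mul_re, Complex.mul_im,
      Complex.add_im, Complex.sub_im, Complex.ofReal_re, Complex.ofReal_im,
      Complex.exp_ofReal_mul_I_re, Complex.exp_ofReal_mul_I_im, Real.cos_neg, Real.sin_neg]
    ring
  have hns : Complex.normSq w = u ^ 2 + v ^ 2 := by
    rw [Complex.normSq_apply, ← hu, ← hv]; ring
  have hr : 0 < u ^ 2 + v ^ 2 := by
    rw [← hns]
    exact Complex.normSq_pos.mpr hw0
  have hre2 : u / (u ^ 2 + v ^ 2) = (1 + α * β) * Real.cos θ - (α + β) := by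
    rw [← hre, Complex.inv_re, hns, hu]
  have him2 : -v / (u ^ 2 + v ^ 2) = (α * β - 1) * Real.sin θ := by
    rw [← him, Complex.inv_im, hns, hv]
  have hc : Real.cos θ ^ 2 + Real.sin θ ^ 2 = 1 := by
    rw [add_comm]; exact Real.sin_sq_add_cos_sq θ
  have h1' : (1 : ℝ) + α * β ≠ 0 := by
    intro h; apply h2; linarith
  have h2' : (1 : ℝ) - α * β ≠ 0 := by
    intro h; apply h1; linarith
  have hu' : u = (u ^ 2 + v ^ 2) * ((1 + α * β) * Real.cos θ - (α + β)) := by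
    field_simp at hre2
    linarith
  have hv' : v = (u ^ 2 + v ^ 2) * ((1 - α * β) * Real.sin θ) := by
    field_simp at him2; linear_combination -him2
  field_simp
  linear_combination ((1 - α*β)^2 * (u + (α+β)*(u^2+v^2) + (u^2+v^2)*(1+α*β)*Real.cos θ)) * hu'
    + ((1+α*β)^2 * (v + (u^2+v^2)*(1-α*β)*Real.sin θ)) * hv'
    + ((u^2+v^2)^2*(1+α*β)^2*(1-α*β)^2) * hc
end

section
/- For α ∈ (-1,1), 0 ≤ γ < 1, and θ ∈ ℝ, the boundary point L(e^{iθ}) of the Pascal snail map L(z) = 2(1-γ)z/(1-αz)² has modulus ρ satisfying ρ = 2(1-γ)|α|/α · (1+α²+2|α|cos φ)/(1-α²)² where φ = arg L(e^{iθ}); equivalently, the point u+iv = L(e^{iθ}) satisfies (u²+v²-eau)² = a²(u²+v²) with e = 2α/(1+α²) and a = 2(1-γ)(1+α²)/(1-α²)². -/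
/-!
Write `L(z) = k z / w²` with `k = 2(1-γ)`, `w = 1 - αz` and `D = |w|² = 1 - 2α Re z + α²`.
On the unit circle `z w̄² = z - 2α + α² z̄`, so `Re L = k((1+α²) Re z - 2α)/D²`, while `|L| = k/D`.
Substituting, `u² + v² - e a u = a k / D = a |L|`, and squaring gives the equation of the limaçon.
-/

open Complex ComplexConjugate

noncomputable def pascalSnail (k α : ℝ) (z : ℂ) : ℂ := k * z / (1 - α * z) ^ 2

lemma normSq_one_sub_ofReal_mul {z : ℂ} (hz : ‖z‖ = 1) (α : ℝ) :
    normSq (1 - α * z) = 1 - 2 * α * z.re + α ^ 2 := by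
  have hre : z.re * z.re + z.im * z.im = 1 := by
    rw [← normSq_apply, normSq_eq_norm_sq, hz, one_pow]
  simp only [normSq_apply, sub_re, sub_im, one_re, one_im, re_ofReal_mul, im_ofReal_mul]
  linear_combination α ^ 2 * hre

lemma one_sub_ofReal_mul_ne_zero {z : ℂ} (hz : ‖z‖ = 1) {α : ℝ} (hα : α ^ 2 ≠ 1) :
    1 - α * z ≠ 0 := by
  intro h
  have hnorm : |α| = 1 := by
    simpa [hz] using congrArg norm (sub_eq_zero.mp h).symm
  exact hα (by rw [← sq_abs, hnorm, one_pow])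

lemma normSq_pascalSnail {z : ℂ} (hz : ‖z‖ = 1) (k α : ℝ) :
    normSq (pascalSnail k α z) = k ^ 2 / normSq (1 - α * z) ^ 2 := by
  rw [pascalSnail, map_div₀, map_mul, map_pow, normSq_ofReal, normSq_eq_norm_sq z, hz]
  ring

lemma re_pascalSnail {z : ℂ} (hz : ‖z‖ = 1) (k α : ℝ) :
    (pascalSnail k α z).re = k * ((1 + α ^ 2) * z.re - 2 * α) / normSq (1 - α * z) ^ 2 := by
  have hzz : z * conj z = 1 := by rw [mul_conj, normSq_eq_norm_sq, hz]; norm_num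
  have hnum : k * z * conj (1 - α * z) ^ 2 = k * (z - (2 * α : ℝ) + (α ^ 2 : ℝ) * conj z) := by
    simp only [map_sub, map_one, map_mul, conj_ofReal]
    push_cast
    linear_combination (k * α ^ 2 * conj z - 2 * k * α) * hzz
  rw [pascalSnail, div_eq_mul_inv, ← inv_pow, inv_def, mul_pow, ← ofReal_pow, ← mul_assoc, hnum,
    re_mul_ofReal, re_ofReal_mul]
  simp only [add_re, sub_re, re_ofReal_mul, conj_re, ofReal_re]
  ring

lemma limacon_identity {k α x u r e a : ℝ} (hD : 1 - 2 * α * x + α ^ 2 ≠ 0) (hα : 1 - α ^ 2 ≠ 0)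
    (hu : u = k * ((1 + α ^ 2) * x - 2 * α) / (1 - 2 * α * x + α ^ 2) ^ 2)
    (hr : r = k ^ 2 / (1 - 2 * α * x + α ^ 2) ^ 2)
    (he : e = 2 * α / (1 + α ^ 2)) (ha : a = k * (1 + α ^ 2) / (1 - α ^ 2) ^ 2) :
    (r - e * a * u) ^ 2 = a ^ 2 * r := by
  have hpolar : r - e * a * u = a * (k / (1 - 2 * α * x + α ^ 2)) := by
    subst hu hr he ha
    field_simp
    ring
  rw [hpolar, hr, mul_pow, div_pow]

theorem pascal_snail_polar_general (α γ θ : ℝ) (hα1 : -1 < α) (hα2 : α < 1)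
    (u v e a : ℝ)
    (hu : u = (2 * (1 - (γ : ℂ)) * Complex.exp (θ * Complex.I) /
        (1 - (α : ℂ) * Complex.exp (θ * Complex.I)) ^ 2).re)
    (hv : v = (2 * (1 - (γ : ℂ)) * Complex.exp (θ * Complex.I) /
        (1 - (α : ℂ) * Complex.exp (θ * Complex.I)) ^ 2).im)
    (he : e = 2 * α / (1 + α ^ 2))
    (ha : a = 2 * (1 - γ) * (1 + α ^ 2) / (1 - α ^ 2) ^ 2) :
    (u ^ 2 + v ^ 2 - e * a * u) ^ 2 = a ^ 2 * (u ^ 2 + v ^ 2) := by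
  set z := Complex.exp (θ * Complex.I)
  have hz : ‖z‖ = 1 := norm_exp_ofReal_mul_I θ
  have hα : α ^ 2 ≠ 1 := by nlinarith
  have hL : 2 * (1 - (γ : ℂ)) * z / (1 - α * z) ^ 2 = pascalSnail (2 * (1 - γ)) α z := by
    simp [pascalSnail]
  have hD : normSq (1 - α * z) ≠ 0 := normSq_eq_zero.not.mpr (one_sub_ofReal_mul_ne_zero hz hα)
  rw [normSq_one_sub_ofReal_mul hz] at hD
  rw [hL] at hu hv
  refine limacon_identity hD (sub_ne_zero.mpr (Ne.symm hα)) ?_ ?_ he (by rw [ha, mul_assoc])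
  · rw [hu, re_pascalSnail hz, normSq_one_sub_ofReal_mul hz]
  · rw [hu, hv, sq, sq, ← normSq_apply, normSq_pascalSnail hz, normSq_one_sub_ofReal_mul hz]

theorem pascal_snail_polar (α γ θ : ℝ) (hα1 : -1 < α) (hα2 : α < 1) (hα0 : α ≠ 0)
    (hγ1 : 0 ≤ γ) (hγ2 : γ < 1)
    (u v e a : ℝ)
    (hu : u = (2 * (1 - (γ : ℂ)) * Complex.exp (θ * Complex.I) /
        (1 - (α : ℂ) * Complex.exp (θ * Complex.I)) ^ 2).re)
    (hv : v = (2 * (1 - (γ : ℂ)) * Complex.exp (θ * Complex.I) /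
        (1 - (α : ℂ) * Complex.exp (θ * Complex.I)) ^ 2).im)
    (he : e = 2 * α / (1 + α ^ 2))
    (ha : a = 2 * (1 - γ) * (1 + α ^ 2) / (1 - α ^ 2) ^ 2) :
    (u ^ 2 + v ^ 2 - e * a * u) ^ 2 = a ^ 2 * (u ^ 2 + v ^ 2) :=
  pascal_snail_polar_general α γ θ hα1 hα2 u v e a hu hv he ha
end

section
/- If u + iv = e^{iθ}·2(1-γ)/((1-α e^{iθ})(1+α e^{iθ})) with α ∈ (-1,0) and 0 ≤ γ < 1, then (4(1-γ)²/(1-α²)²)u² + (4(1-γ)²/(1+α²)²)v² = (u²+v²)² (the point lies on a Booth lemniscate). -/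
open Complex

lemma div_re_aux (a b d e : ℝ) :
    (((a : ℂ) + (b : ℂ) * I) / ((d : ℂ) + (e : ℂ) * I)).re
      = (a * d + b * e) / (d ^ 2 + e ^ 2) := by
  simp [Complex.div_re, Complex.normSq_apply]
  ring_nf

lemma div_im_aux (a b d e : ℝ) :
    (((a : ℂ) + (b : ℂ) * I) / ((d : ℂ) + (e : ℂ) * I)).im
      = (b * d - a * e) / (d ^ 2 + e ^ 2) := by
  simp [Complex.div_im, Complex.normSq_apply]
  ring_nf

theorem booth_lemniscate (α γ θ : ℝ) (hα1 : -1 < α) (hα2 : α < 0)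
    (hγ1 : 0 ≤ γ) (hγ2 : γ < 1)
    (u v : ℝ)
    (hu : u = (2 * (1 - (γ : ℂ)) * Complex.exp (θ * Complex.I) /
        (1 - (α : ℂ) ^ 2 * Complex.exp (2 * θ * Complex.I))).re)
    (hv : v = (2 * (1 - (γ : ℂ)) * Complex.exp (θ * Complex.I) /
        (1 - (α : ℂ) ^ 2 * Complex.exp (2 * θ * Complex.I))).im) :
    (4 * (1 - γ) ^ 2 / (1 - α ^ 2) ^ 2) * u ^ 2 + (4 * (1 - γ) ^ 2 / (1 + α ^ 2) ^ 2) * v ^ 2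
      = (u ^ 2 + v ^ 2) ^ 2 := by
  set c := Real.cos θ with hcdef
  set s := Real.sin θ with hsdef
  have hcs : c ^ 2 + s ^ 2 = 1 := by
    rw [hcdef, hsdef]; exact Real.cos_sq_add_sin_sq θ
  have ha2 : α ^ 2 < 1 := by nlinarith
  have e1 : Complex.exp (θ * Complex.I) = (c : ℂ) + (s : ℂ) * Complex.I := by
    rw [Complex.exp_mul_I]; simp [hcdef, hsdef]
  have e2 : Complex.exp (2 * θ * Complex.I)
      = ((Real.cos (2*θ) : ℂ)) + ((Real.sin (2*θ) : ℂ)) * Complex.I := by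
    have h : (2 * (θ:ℂ)) = ((2*θ : ℝ) : ℂ) := by push_cast; ring
    rw [h, Complex.exp_mul_I]; simp
  have hc2 : Real.cos (2*θ) = c^2 - s^2 := by
    rw [Real.cos_two_mul]; nlinarith [hcs]
  have hs2 : Real.sin (2*θ) = 2 * s * c := by
    rw [Real.sin_two_mul]
  have e3 : (1 - (α:ℂ)^2 * Complex.exp (2 * θ * Complex.I))
      = (((1 - α^2*(c^2-s^2)) : ℝ) : ℂ) + (((-(α^2*(2*s*c))) : ℝ) : ℂ) * Complex.I := by
    rw [e2, hc2, hs2]; push_cast; ring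
  have e4 : (2 * (1 - (γ:ℂ)) * Complex.exp (θ * Complex.I))
      = (((2*(1-γ)*c) : ℝ) : ℂ) + (((2*(1-γ)*s) : ℝ) : ℂ) * Complex.I := by
    rw [e1]; push_cast; ring
  set N := (1-α^2)^2*c^2 + (1+α^2)^2*s^2 with hNdef
  have hQ : (1 - α^2*(c^2-s^2))^2 + (-(α^2*(2*s*c)))^2 = N := by
    rw [hNdef]; linear_combination (α^4*(c^2+s^2) - 1) * hcs
  have hN : 0 < N := by
    rw [hNdef]; nlinarith [sq_nonneg c, sq_nonneg s, sq_nonneg (α^2)]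
  have hu2 : u = 2*(1-γ)*(1-α^2)*c / N := by
    rw [hu, e3, e4, div_re_aux, hQ]
    congr 1
    linear_combination (-2*(1-γ)*c*α^2) * hcs
  have hv2 : v = 2*(1-γ)*(1+α^2)*s / N := by
    rw [hv, e3, e4, div_im_aux, hQ]
    congr 1
    linear_combination (2*(1-γ)*s*α^2) * hcs
  have h1 : (1 - α^2) ≠ 0 := by nlinarith
  have h2 : (1 + α^2) ≠ 0 := by positivity
  have hlhs : (4 * (1 - γ) ^ 2 / (1 - α ^ 2) ^ 2) * u ^ 2
      + (4 * (1 - γ) ^ 2 / (1 + α ^ 2) ^ 2) * v ^ 2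
      = 16*(1-γ)^4*(c^2+s^2)/N^2 := by
    rw [hu2, hv2]
    field_simp
    ring
  have hsum : u^2 + v^2 = 4*(1-γ)^2/N := by
    rw [hu2, hv2, hNdef]
    field_simp
    ring
  rw [hlhs, hcs, hsum]
  field_simp
  ring
end

section
/- If z is a complex number with positive real part and t ∈ [0,1], then Re(z^t) ≥ (Re z)^t, where z^t denotes the principal branch of the power. -/
/-!
Write `z = ‖z‖ e^{iθ}` with `|θ| ≤ π/2`. Then `Re (z ^ t) = ‖z‖ ^ t cos (θ t)` and
`(Re z) ^ t = ‖z‖ ^ t (cos θ) ^ t`, so it suffices that `(cos θ) ^ t ≤ cos (θ t)`. Bernoulli's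
inequality bounds `(cos θ) ^ t` by the chord value `t cos θ + (1 - t)`, and concavity of `cos` on
`[-π/2, π/2]` bounds that chord value by `cos (t θ + (1 - t) 0)`.
-/

open Complex

theorem Real.cos_rpow_le_cos_mul {θ t : ℝ} (hθ : |θ| ≤ Real.pi / 2) (ht₀ : 0 ≤ t) (ht₁ : t ≤ 1) :
    Real.cos θ ^ t ≤ Real.cos (θ * t) := by
  have hθ_mem : θ ∈ Set.Icc (-(Real.pi / 2)) (Real.pi / 2) := abs_le.mp hθ
  have hzero_mem : (0 : ℝ) ∈ Set.Icc (-(Real.pi / 2)) (Real.pi / 2) := by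
    constructor <;> linarith [Real.pi_pos]
  have bernoulli : Real.cos θ ^ t ≤ t * Real.cos θ + (1 - t) := by
    have := rpow_one_add_le_one_add_mul_self (s := Real.cos θ - 1)
      (by linarith [Real.cos_nonneg_of_mem_Icc hθ_mem]) ht₀ ht₁
    rw [add_sub_cancel] at this
    linarith
  have concavity : t * Real.cos θ + (1 - t) * Real.cos 0 ≤ Real.cos (t • θ + (1 - t) • 0) :=
    strictConcaveOn_cos_Icc.concaveOn.2 hθ_mem hzero_mem ht₀ (by linarith) (by ring)
  rw [Real.cos_zero, mul_one, smul_zero, add_zero, smul_eq_mul, mul_comm t θ] at concavity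
  exact bernoulli.trans concavity

theorem re_cpow_ge (z : ℂ) (hz : 0 < z.re) (t : ℝ) (ht1 : 0 ≤ t) (ht2 : t ≤ 1) :
    (z.re) ^ t ≤ (z ^ (t : ℂ)).re := by
  have harg : |arg z| ≤ Real.pi / 2 := abs_arg_le_pi_div_two_iff.mpr hz.le
  have hcos : 0 ≤ Real.cos (arg z) := Real.cos_nonneg_of_mem_Icc (abs_le.mp harg)
  calc z.re ^ t = ‖z‖ ^ t * Real.cos (arg z) ^ t := by
        rw [← norm_mul_cos_arg z, Real.mul_rpow (norm_nonneg z) hcos]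
    _ ≤ ‖z‖ ^ t * Real.cos (arg z * t) := by
        gcongr
        exact Real.cos_rpow_le_cos_mul harg ht1 ht2
    _ = (z ^ (t : ℂ)).re := (cpow_ofReal_re z t).symm
end

section
/- Let -1 < α ≤ β < 1, αβ > 0 with α + β > 0, 0 ≤ γ < 1, 0 < r < 1. Then for all θ ∈ ℝ, -L(-r) ≤ |L(r e^{iθ})| ≤ L(r), where L(z) = 2(1-γ)z/((1-αz)(1-βz)). That is, the maximum modulus on the circle |z| = r is attained at z = r and the minimum at z = -r. -/
open Complex

theorem modulus_bounds_pos (α β γ r : ℝ) (hα : -1 < α) (hαβ : α ≤ β) (hβ : β < 1)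
    (hpos : 0 < α * β) (hsum : 0 < α + β) (hγ1 : 0 ≤ γ) (hγ2 : γ < 1)
    (hr1 : 0 < r) (hr2 : r < 1)
    (L : ℂ → ℂ)
    (hL : L = fun z : ℂ => 2 * (1 - (γ : ℂ)) * z / ((1 - (α : ℂ) * z) * (1 - (β : ℂ) * z))) :
    ∀ θ : ℝ,
      (-(L (-(r : ℂ)))).re ≤ ‖L ((r : ℂ) * Complex.exp (θ * Complex.I))‖ ∧
      ‖L ((r : ℂ) * Complex.exp (θ * Complex.I))‖ ≤ (L (r : ℂ)).re := by
  have hα0 : 0 < α := by nlinarith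
  have hβ0 : 0 < β := by nlinarith
  have hα1 : α < 1 := lt_of_le_of_lt hαβ hβ
  have hαr : 0 < α * r := mul_pos hα0 hr1
  have hβr : 0 < β * r := mul_pos hβ0 hr1
  have hαr1 : α * r < 1 := by nlinarith
  have hβr1 : β * r < 1 := by nlinarith
  have hA : 0 < 2 * (1 - γ) * r := by nlinarith
  intro θ
  set z : ℂ := (r : ℂ) * Complex.exp (θ * Complex.I) with hz
  have habsz : ‖z‖ = r := by
    rw [hz, norm_mul, Complex.norm_real, Real.norm_eq_abs, Complex.norm_exp_ofReal_mul_I,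
      abs_of_pos hr1, mul_one]
  have key : ∀ c : ℝ, 0 < c * r → c * r < 1 →
      1 - c * r ≤ ‖(1 - (c : ℂ) * z)‖ ∧
      ‖(1 - (c : ℂ) * z)‖ ≤ 1 + c * r := by
    intro c hc1 hc2
    have hc0 : 0 < c := by nlinarith
    have habscz : ‖((c : ℂ) * z)‖ = c * r := by
      rw [norm_mul, Complex.norm_real, Real.norm_eq_abs, habsz, abs_of_pos hc0]
    constructor
    · have h1 := norm_add_le (1 - (c : ℂ) * z) ((c : ℂ) * z)
      simp only [sub_add_cancel, norm_one, habscz] at h1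
      linarith
    · have h2 := norm_sub_le (1 : ℂ) ((c : ℂ) * z)
      simpa [habscz, habsz, abs_of_pos hc0] using h2
  obtain ⟨hαlo, hαhi⟩ := key α hαr hαr1
  obtain ⟨hβlo, hβhi⟩ := key β hβr hβr1
  have hd1 : (0:ℝ) < ‖(1 - (α : ℂ) * z)‖ := lt_of_lt_of_le (by linarith) hαlo
  have hd2 : (0:ℝ) < ‖(1 - (β : ℂ) * z)‖ := lt_of_lt_of_le (by linarith) hβlo
  have hnum : ‖(2 * (1 - (γ:ℂ)) * z)‖ = 2 * (1 - γ) * r := by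
    have h : (2 : ℂ) * (1 - (γ:ℂ)) = ((2 * (1 - γ) : ℝ) : ℂ) := by push_cast; ring
    rw [norm_mul, h, Complex.norm_real, Real.norm_eq_abs, habsz, _root_.abs_of_nonneg (by linarith : (0:ℝ) ≤ 2 * (1 - γ))]
  have habsL : ‖(L z)‖ =
      (2 * (1 - γ) * r) / (‖(1 - (α : ℂ) * z)‖ * ‖(1 - (β : ℂ) * z)‖) := by
    rw [hL]
    simp only
    rw [norm_div, hnum, norm_mul]
  have hLr : (L (r : ℂ)).re = 2 * (1 - γ) * r / ((1 - α * r) * (1 - β * r)) := by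
    rw [hL]
    have h : ((2 * (1 - γ) * r / ((1 - α * r) * (1 - β * r)) : ℝ) : ℂ) =
        2 * (1 - (γ : ℂ)) * (r : ℂ) / ((1 - (α : ℂ) * r) * (1 - (β : ℂ) * r)) := by
      push_cast; ring
    simp only
    rw [← h, Complex.ofReal_re]
  have hLmr : (-(L (-(r : ℂ)))).re = 2 * (1 - γ) * r / ((1 + α * r) * (1 + β * r)) := by
    rw [hL]
    have h : ((2 * (1 - γ) * r / ((1 + α * r) * (1 + β * r)) : ℝ) : ℂ) =
        -(2 * (1 - (γ : ℂ)) * (-(r:ℂ)) / ((1 - (α : ℂ) * (-(r:ℂ))) * (1 - (β : ℂ) * (-(r:ℂ))))) := by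
      push_cast
      ring
    simp only
    rw [← h, Complex.ofReal_re]
  rw [hLmr, hLr, habsL]
  constructor
  · exact div_le_div_of_nonneg_left hA.le (mul_pos hd1 hd2)
      (mul_le_mul hαhi hβhi hd2.le (by linarith))
  · exact div_le_div_of_nonneg_left hA.le (mul_pos (by linarith : (0:ℝ) < 1 - α * r) (by linarith : (0:ℝ) < 1 - β * r))
      (mul_le_mul hαlo hβlo (by linarith) hd1.le)
end

section
/- Let -1 < α < 0 < β < 1 (so αβ < 0) with α + β ≠ 0, 0 ≤ γ < 1, 0 < r < 1. Then for all θ ∈ ℝ, |L(re^{iθ})| ≥ 4(1-γ)r√(|αβ|)/((β-α)(1-αβr²)), where L(z) = 2(1-γ)z/((1-αz)(1-βz)). -/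
open Complex
set_option maxHeartbeats 1000000 in

theorem modulus_lower_bound_neg (α β γ r : ℝ) (hα : -1 < α) (hα0 : α < 0)
    (hβ0 : 0 < β) (hβ : β < 1) (hsum : α + β ≠ 0) (hγ1 : 0 ≤ γ) (hγ2 : γ < 1)
    (hr1 : 0 < r) (hr2 : r < 1)
    (L : ℂ → ℂ)
    (hL : L = fun z : ℂ => 2 * (1 - (γ : ℂ)) * z / ((1 - (α : ℂ) * z) * (1 - (β : ℂ) * z))) :
    ∀ θ : ℝ,
      4 * (1 - γ) * r * Real.sqrt |α * β| / ((β - α) * (1 - α * β * r ^ 2))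
        ≤ ‖L ((r : ℂ) * Complex.exp (θ * Complex.I))‖ := by
  intro θ
  subst hL
  set z : ℂ := (r : ℂ) * Complex.exp (θ * Complex.I) with hz
  have habsz : ‖z‖ = r := by
    simp [hz, Complex.norm_exp, abs_of_pos hr1]
  set c : ℝ := Real.cos θ with hc
  have hnorm : ∀ a : ℝ,
      ‖1 - (a : ℂ) * z‖ ^ 2 = 1 - 2*a*r*c + a^2*r^2 := by
    intro a
    rw [Complex.sq_norm, Complex.normSq_apply]
    simp [hz, Complex.exp_mul_I, Complex.cos_ofReal_re, Complex.sin_ofReal_re]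
    linear_combination (a^2*r^2) * Real.sin_sq_add_cos_sq θ
  have hc1 : -1 ≤ c := Real.neg_one_le_cos θ
  have hc2 : c ≤ 1 := Real.cos_le_one θ
  set U : ℝ := ‖1 - (α : ℂ) * z‖ with hU
  set V : ℝ := ‖1 - (β : ℂ) * z‖ with hV
  have hU2 : U^2 = 1 - 2*α*r*c + α^2*r^2 := hnorm α
  have hV2 : V^2 = 1 - 2*β*r*c + β^2*r^2 := hnorm β
  have hUnn : 0 ≤ U := norm_nonneg _
  have hVnn : 0 ≤ V := norm_nonneg _
  have har : 0 < 1 + α * r := by nlinarith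
  have hbr : 0 < 1 - β * r := by nlinarith
  have hU2pos : 0 < U^2 := by
    rw [hU2]
    nlinarith [mul_pos har har,
      mul_nonneg (by nlinarith : (0:ℝ) ≤ -2*α*r) (by linarith : (0:ℝ) ≤ c+1)]
  have hV2pos : 0 < V^2 := by
    rw [hV2]
    nlinarith [mul_pos hbr hbr,
      mul_nonneg (by nlinarith : (0:ℝ) ≤ 2*β*r) (by linarith : (0:ℝ) ≤ 1-c)]
  have hUpos : 0 < U := by nlinarith
  have hVpos : 0 < V := by nlinarith
  have h1γ : ‖1 - (γ:ℂ)‖ = 1 - γ := by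
    rw [show (1:ℂ) - γ = ((1-γ:ℝ):ℂ) by push_cast; ring, Complex.norm_real, Real.norm_eq_abs]
    exact abs_of_nonneg (by linarith)
  have habsL : ‖2 * (1 - (γ : ℂ)) * z / ((1 - (α : ℂ) * z) * (1 - (β : ℂ) * z))‖
      = 2 * (1 - γ) * r / (U * V) := by
    rw [norm_div, norm_mul, habsz, norm_mul, norm_mul, h1γ, ← hU, ← hV]
    norm_num
  clear_value z U V c
  have hab0 : α * β < 0 := mul_neg_of_neg_of_pos hα0 hβ0
  have hD2 : 0 < 1 - α * β * r ^ 2 := by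
    nlinarith [mul_pos (neg_pos.mpr hab0) (mul_pos hr1 hr1)]
  have hD : 0 < (β - α) * (1 - α * β * r ^ 2) := mul_pos (by linarith) hD2
  set s : ℝ := Real.sqrt |α * β| with hs
  have hab : |α * β| = -(α * β) := abs_of_neg (mul_neg_of_neg_of_pos hα0 hβ0)
  have hsnn : 0 ≤ s := Real.sqrt_nonneg _
  have hs2 : s^2 = -(α * β) := by rw [hs, Real.sq_sqrt (abs_nonneg _), hab]
  have key : 4*(-(α*β)) * ((1-2*α*r*c+α^2*r^2) * (1-2*β*r*c+β^2*r^2))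
      ≤ ((β-α)*(1-α*β*r^2))^2 := by
    nlinarith [sq_nonneg (β*(1-2*α*r*c+α^2*r^2) + α*(1-2*β*r*c+β^2*r^2))]
  have hsq : (2*s*(U*V))^2 ≤ ((β-α)*(1-α*β*r^2))^2 := by
    have h4 : (2*s*(U*V))^2 = 4*s^2*(U^2*V^2) := by ring
    rw [h4, hs2, hU2, hV2]
    linarith [key]
  have hsmall : 2*s*(U*V) ≤ (β-α)*(1-α*β*r^2) := by
    nlinarith [mul_nonneg (mul_nonneg (by norm_num : (0:ℝ) ≤ 2) hsnn) (mul_nonneg hUnn hVnn)]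
  rw [habsL, div_le_div_iff₀ hD (mul_pos hUpos hVpos)]
  nlinarith [mul_le_mul_of_nonneg_left hsmall (by nlinarith : (0:ℝ) ≤ 2*(1-γ)*r)]
end

section
/- Let f be analytic on the unit disk with f(0) = 0, f'(0) = 1, and suppose Re(zf'(z)/f(z)) > 1 + L₀ for all z ∈ 𝔻, where L₀ < 0. Then the function φ(z) = ∫₀ᶻ (f(t)/t)^{-1/L₀} dt satisfies Re(1 + zφ''(z)/φ'(z)) > 0 for all z ∈ 𝔻, i.e. φ is convex. -/
/-!
With `c = -1/L₀ > 0` and `h = f z / z`, we have `φ' = h ^ c`, so logarithmic differentiation gives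
`z φ''/φ' = c (z f'/f - 1)`, whose real part exceeds `c L₀ = -1` by the hypothesis on `f`.
-/

open Complex Metric Set Filter Topology

lemma deriv_mul_eq_of_eventuallyEq_cpow {g h : ℂ → ℂ} {c z : ℂ}
    (hgh : g =ᶠ[𝓝 z] fun w => h w ^ c) (hh : DifferentiableAt ℂ h z) (hz : h z ∈ slitPlane) :
    deriv g z * h z = c * deriv h z * g z := by
  have hne : h z ≠ 0 := slitPlane_ne_zero hz
  rw [hgh.deriv_eq, (hh.hasDerivAt.cpow_const hz).deriv, hgh.eq_of_nhds, cpow_sub _ _ hne,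
    cpow_one]
  field_simp

/-- The principal power `h ^ c` jumps across the branch cut, but an analytic `g` agreeing with it
near one point off the cut satisfies `g' h = c h' g` throughout, by the identity theorem. -/
lemma eqOn_deriv_mul_of_eventuallyEq_cpow_nhdsNE {U : Set ℂ} {g h : ℂ → ℂ} {c z₀ : ℂ}
    (hg : AnalyticOnNhd ℂ g U) (hh : AnalyticOnNhd ℂ h U) (hU : IsPreconnected U) (hz₀ : z₀ ∈ U)
    (hslit : h z₀ ∈ slitPlane) (hgh : g =ᶠ[𝓝[≠] z₀] fun w => h w ^ c) :
    EqOn (fun z => deriv g z * h z) (fun z => c * deriv h z * g z) U := by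
  refine (hg.deriv.mul hh).eqOn_of_preconnected_of_frequently_eq
    ((analyticOnNhd_const.mul hh.deriv).mul hg) hU hz₀ (Eventually.frequently ?_)
  have hgh_nhds : ∀ᶠ w in 𝓝[≠] z₀, g =ᶠ[𝓝 w] fun w => h w ^ c := by
    rw [EventuallyEq, eventually_nhdsWithin_iff] at hgh
    rw [eventually_nhdsWithin_iff]
    filter_upwards [hgh.eventually_nhds] with w hw hwz
    filter_upwards [hw, isOpen_ne.mem_nhds hwz] with v hv hvz using hv hvz
  have hslit_nhds : ∀ᶠ w in 𝓝 z₀, h w ∈ slitPlane :=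
    (hh z₀ hz₀).continuousAt.preimage_mem_nhds (isOpen_slitPlane.mem_nhds hslit)
  filter_upwards [hgh_nhds, nhdsWithin_le_nhds hslit_nhds,
    nhdsWithin_le_nhds (hh z₀ hz₀).eventually_analyticAt] with w hgw hsw hhw
  exact deriv_mul_eq_of_eventuallyEq_cpow hgw hhw.differentiableAt hsw

section dslope

variable {𝕜 : Type*} [NontriviallyNormedField 𝕜] {f : 𝕜 → 𝕜} {z : 𝕜}

lemma dslope_zero_of_ne (hf0 : f 0 = 0) (hz : z ≠ 0) : dslope f 0 z = f z / z := by
  rw [dslope_of_ne _ hz, slope_def_field, hf0, sub_zero, sub_zero]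

lemma logDeriv_dslope_zero (hf0 : f 0 = 0) (hz : z ≠ 0) (hfz : f z ≠ 0)
    (hf : DifferentiableAt 𝕜 f z) : z * logDeriv (dslope f 0) z = z * logDeriv f z - 1 := by
  have heq : dslope f 0 =ᶠ[𝓝 z] fun w => f w / w := by
    filter_upwards [isOpen_ne.mem_nhds hz] with w hw using dslope_zero_of_ne hf0 hw
  rw [(logDeriv_congr_nhds heq).eq_of_nhds,
    logDeriv_div (g := fun w => w) z hfz hz hf differentiableAt_id, logDeriv_id']
  field_simp

end dslope

lemma re_one_add_mul_sub_one_pos {L : ℝ} (hL : L < 0) {w : ℂ} (hw : 1 + L < w.re) :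
    0 < (1 + ((-(1 / L) : ℝ) : ℂ) * (w - 1)).re := by
  have hc : 0 < -(1 / L) := by simpa using hL
  have : -(1 / L) * L = -1 := by field_simp [hL.ne]
  simp only [add_re, one_re, re_ofReal_mul, sub_re]
  nlinarith

theorem convexity_of_integral_transform_general (L₀ : ℝ) (hL₀ : L₀ < 0) (f φ : ℂ → ℂ)
    (hf : DifferentiableOn ℂ f (ball (0 : ℂ) 1)) (hf0 : f 0 = 0) (hf'0 : deriv f 0 = 1)
    (hfne : ∀ z ∈ ball (0 : ℂ) 1, z ≠ 0 → f z / z ≠ 0)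
    (hre : ∀ z ∈ ball (0 : ℂ) 1, z ≠ 0 → 1 + L₀ < (z * deriv f z / f z).re)
    (hφ : DifferentiableOn ℂ φ (ball (0 : ℂ) 1))
    (hφ' : ∀ z ∈ ball (0 : ℂ) 1, z ≠ 0 →
      deriv φ z = (f z / z) ^ ((-(1 / L₀) : ℝ) : ℂ)) :
    ∀ z ∈ ball (0 : ℂ) 1, 0 < (1 + z * deriv (deriv φ) z / deriv φ z).re := by
  intro z hz
  rcases eq_or_ne z 0 with rfl | hz0
  · simp
  set c : ℂ := ((-(1 / L₀) : ℝ) : ℂ)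
  have hgh : deriv φ =ᶠ[𝓝[≠] 0] fun w => dslope f 0 w ^ c := by
    filter_upwards [nhdsWithin_le_nhds (ball_mem_nhds 0 one_pos), self_mem_nhdsWithin]
      with w hw hw0
    rw [hφ' w hw hw0, dslope_zero_of_ne hf0 hw0]
  have hrel := eqOn_deriv_mul_of_eventuallyEq_cpow_nhdsNE (hφ.analyticOnNhd isOpen_ball).deriv
    (((differentiableOn_dslope (ball_mem_nhds 0 one_pos)).2 hf).analyticOnNhd isOpen_ball)
    (convex_ball 0 1).isPreconnected (mem_ball_self one_pos)
    (by simp [dslope_same, hf'0]) hgh hz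
  have hhz : dslope f 0 z ≠ 0 := dslope_zero_of_ne hf0 hz0 ▸ hfne z hz hz0
  have hgz : deriv φ z ≠ 0 := by
    simp [hφ' z hz hz0, cpow_eq_zero_iff, hfne z hz hz0]
  have hlogDeriv : logDeriv (deriv φ) z = c * logDeriv (dslope f 0) z := by
    simp only [logDeriv_apply]
    field_simp
    linear_combination hrel
  have hlog : z * deriv (deriv φ) z / deriv φ z = c * (z * deriv f z / f z - 1) := by
    rw [mul_div_assoc, ← logDeriv_apply, hlogDeriv, mul_left_comm,
      logDeriv_dslope_zero hf0 hz0 (by simpa [hz0] using hfne z hz hz0)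
        (hf.differentiableAt (isOpen_ball.mem_nhds hz)), logDeriv_apply, mul_div_assoc]
  rw [hlog]
  exact re_one_add_mul_sub_one_pos hL₀ (hre z hz hz0)

theorem convexity_of_integral_transform (L₀ : ℝ) (hL₀ : L₀ < 0) (f φ : ℂ → ℂ)
    (hf : DifferentiableOn ℂ f (ball (0 : ℂ) 1)) (hf0 : f 0 = 0) (hf'0 : deriv f 0 = 1)
    (hfne : ∀ z ∈ ball (0 : ℂ) 1, z ≠ 0 → f z / z ≠ 0)
    (hre : ∀ z ∈ ball (0 : ℂ) 1, z ≠ 0 → 1 + L₀ < (z * deriv f z / f z).re)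
    (hφ : DifferentiableOn ℂ φ (ball (0 : ℂ) 1)) (hφ0 : φ 0 = 0)
    (hφ' : ∀ z ∈ ball (0 : ℂ) 1, z ≠ 0 →
      deriv φ z = (f z / z) ^ ((-(1 / L₀) : ℝ) : ℂ)) :
    ∀ z ∈ ball (0 : ℂ) 1, 0 < (1 + z * deriv (deriv φ) z / deriv φ z).re :=
  convexity_of_integral_transform_general L₀ hL₀ f φ hf hf0 hf'0 hfne hre hφ hφ'
end

section
/- Let -1 < α < β < 1 and γ ≥ 1 - (β-α)/2 (so that q := 2(1-γ)/(β-α) ∈ (0,1]). Then for all z in the open unit disk, Re(((1-αz)/(1-βz))^q) ≥ (Re((1-αz)/(1-βz)))^q > ((1+α)/(1+β))^q, where the power is principal. -/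
open Complex

private lemma cos_rpow_le_aux {q θ : ℝ} (hq0 : 0 < q) (hq1 : q ≤ 1)
    (h0 : 0 ≤ θ) (h2 : θ < Real.pi / 2) :
    Real.cos θ ^ q ≤ Real.cos (q * θ) := by
  set f : ℝ → ℝ := fun t => Real.cos (q * t) - Real.cos t ^ q with hf
  have key : MonotoneOn f (Set.Icc 0 θ) := by
    have hc : ContinuousOn f (Set.Icc 0 θ) := by
      apply ContinuousOn.sub
      · exact (Real.continuous_cos.comp (continuous_const.mul continuous_id)).continuousOn
      · apply ContinuousOn.rpow_const (Real.continuous_cos.continuousOn)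
        intro t ht
        left
        have : 0 < Real.cos t := Real.cos_pos_of_mem_Ioo
          ⟨lt_of_lt_of_le (by linarith [Real.pi_pos]) ht.1, lt_of_le_of_lt ht.2 h2⟩
        exact ne_of_gt this
    apply monotoneOn_of_deriv_nonneg (convex_Icc 0 θ) hc
    · intro t ht
      rw [interior_Icc] at ht
      have hcos : 0 < Real.cos t := Real.cos_pos_of_mem_Ioo
        ⟨lt_of_lt_of_le (by linarith [Real.pi_pos]) (le_of_lt ht.1), lt_trans ht.2 h2⟩
      have dlin : HasDerivAt (fun t : ℝ => q * t) q t := by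
        simpa using (hasDerivAt_id t).const_mul q
      have d1 : HasDerivAt (fun t => Real.cos (q * t)) (-Real.sin (q * t) * q) t :=
        (Real.hasDerivAt_cos (q * t)).comp t dlin
      have d2 : HasDerivAt (fun t => Real.cos t ^ q)
          ((q * Real.cos t ^ (q - 1)) * (-Real.sin t)) t :=
        (Real.hasDerivAt_rpow_const (Or.inl (ne_of_gt hcos))).comp t (Real.hasDerivAt_cos t)
      exact (d1.sub d2).differentiableAt.differentiableWithinAt
    · intro t ht
      rw [interior_Icc] at ht
      have ht0 : 0 < t := ht.1
      have ht2 : t < Real.pi / 2 := lt_trans ht.2 h2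
      have hcos : 0 < Real.cos t := Real.cos_pos_of_mem_Ioo
        ⟨by linarith [Real.pi_pos], ht2⟩
      have dlin : HasDerivAt (fun t : ℝ => q * t) q t := by
        simpa using (hasDerivAt_id t).const_mul q
      have d1 : HasDerivAt (fun t => Real.cos (q * t)) (-Real.sin (q * t) * q) t :=
        (Real.hasDerivAt_cos (q * t)).comp t dlin
      have d2 : HasDerivAt (fun t => Real.cos t ^ q)
          ((q * Real.cos t ^ (q - 1)) * (-Real.sin t)) t :=
        (Real.hasDerivAt_rpow_const (Or.inl (ne_of_gt hcos))).comp t (Real.hasDerivAt_cos t)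
      have hd : HasDerivAt f (-Real.sin (q * t) * q - (q * Real.cos t ^ (q - 1)) * (-Real.sin t)) t :=
        d1.sub d2
      rw [hd.deriv]
      have hsinle : Real.sin (q * t) ≤ Real.sin t := by
        apply Real.strictMonoOn_sin.monotoneOn
        · constructor <;> nlinarith [Real.pi_pos]
        · constructor <;> linarith
        · nlinarith
      have hpow1 : 1 ≤ Real.cos t ^ (q - 1) :=
        Real.one_le_rpow_of_pos_of_le_one_of_nonpos hcos (Real.cos_le_one t) (by linarith)
      have hsin0 : 0 ≤ Real.sin t := Real.sin_nonneg_of_nonneg_of_le_pi (le_of_lt ht0)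
        (by linarith [Real.pi_pos])
      nlinarith [mul_le_mul_of_nonneg_right hpow1 hsin0]
  have := key (Set.left_mem_Icc.2 h0) (Set.right_mem_Icc.2 h0) h0
  simp only [hf, mul_zero, Real.cos_zero, Real.one_rpow] at this
  linarith

private lemma cos_rpow_le {q θ : ℝ} (hq0 : 0 < q) (hq1 : q ≤ 1)
    (h2 : |θ| < Real.pi / 2) :
    Real.cos θ ^ q ≤ Real.cos (θ * q) := by
  rcases le_or_gt 0 θ with h | h
  · rw [_root_.abs_of_nonneg h] at h2
    rw [mul_comm]
    exact cos_rpow_le_aux hq0 hq1 h h2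
  · rw [_root_.abs_of_neg h] at h2
    have := cos_rpow_le_aux hq0 hq1 (by linarith : (0:ℝ) ≤ -θ) h2
    rw [Real.cos_neg] at this
    calc Real.cos θ ^ q ≤ Real.cos (q * -θ) := this
      _ = Real.cos (θ * q) := by rw [← Real.cos_neg]; ring_nf

private lemma re_rpow_le_re_cpow {w : ℂ} (hw : 0 < w.re) {q : ℝ} (hq0 : 0 < q) (hq1 : q ≤ 1) :
    w.re ^ q ≤ (w ^ (q : ℂ)).re := by
  have hw0 : w ≠ 0 := by intro h; rw [h] at hw; simp at hw
  rw [Complex.cpow_ofReal_re]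
  have harg : |arg w| < Real.pi / 2 := Complex.abs_arg_lt_pi_div_two_iff.2 (Or.inl hw)
  have hre : w.re = ‖w‖ * Real.cos (arg w) := (Complex.norm_mul_cos_arg w).symm
  have hcos : 0 < Real.cos (arg w) := by
    have := Real.cos_pos_of_mem_Ioo (show arg w ∈ Set.Ioo (-(Real.pi/2)) (Real.pi/2) from
      abs_lt.1 harg |> fun h => ⟨h.1, h.2⟩)
    exact this
  rw [hre, Real.mul_rpow (norm_nonneg w) (le_of_lt hcos)]
  exact mul_le_mul_of_nonneg_left (cos_rpow_le hq0 hq1 harg)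
    (Real.rpow_nonneg (norm_nonneg w) q)

set_option maxHeartbeats 1000000 in
theorem re_power_bound (α β γ : ℝ) (hα : -1 < α) (hαβ : α < β) (hβ : β < 1)
    (hγ1 : 1 - (β - α) / 2 ≤ γ) (hγ2 : γ < 1)
    (q : ℝ) (hq : q = 2 * (1 - γ) / (β - α))
    (z : ℂ) (hz : ‖z‖ < 1) :
    (((1 - (α : ℂ) * z) / (1 - (β : ℂ) * z)).re) ^ q
        ≤ ((((1 - (α : ℂ) * z) / (1 - (β : ℂ) * z)) ^ (q : ℂ))).re ∧
    ((1 + α) / (1 + β)) ^ q < (((1 - (α : ℂ) * z) / (1 - (β : ℂ) * z)).re) ^ q := by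
  have hβα : 0 < β - α := by linarith
  have hq0 : 0 < q := by
    rw [hq]; apply div_pos <;> linarith
  have hq1 : q ≤ 1 := by
    rw [hq, div_le_one hβα]; linarith
  set x := z.re with hx
  set y := z.im with hy
  have hs : x ^ 2 + y ^ 2 < 1 := by
    have h1 : x ^ 2 + y ^ 2 = ‖z‖ ^ 2 := by
      rw [Complex.sq_norm, Complex.normSq_apply]; ring
    nlinarith [norm_nonneg z]
  have hx2 : x ^ 2 ≤ x ^ 2 + y ^ 2 := by nlinarith
  have hx1 : -1 < x := by nlinarith
  have hβ2 : β ^ 2 < 1 := by nlinarith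
  have hbx : β * x < 1 := by nlinarith [sq_nonneg (β - x)]
  have hD : 0 < (1 - β * x) ^ 2 + β ^ 2 * y ^ 2 := by
    nlinarith [sq_nonneg (β * y), mul_pos (show (0:ℝ) < 1 - β * x by linarith) (show (0:ℝ) < 1 - β * x by linarith)]
  have hden : (1 - (β : ℂ) * z) ≠ 0 := by
    intro h
    have h1 : ((1 : ℂ) - β * z).re = 0 := by rw [h]; simp
    have h2 : ((1 : ℂ) - β * z).im = 0 := by rw [h]; simp
    simp [Complex.sub_re, Complex.mul_re, Complex.sub_im, Complex.mul_im] at h1 h2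
    nlinarith [h1, h2]
  have hre : ((1 - (α : ℂ) * z) / (1 - (β : ℂ) * z)).re
      = ((1 - α * x) * (1 - β * x) + (α * y) * (β * y)) / ((1 - β * x) ^ 2 + β ^ 2 * y ^ 2) := by
    rw [Complex.div_re]
    simp [Complex.normSq_apply, Complex.sub_re, Complex.sub_im, Complex.mul_re, Complex.mul_im]
    ring
  have hkey : (1 + α) / (1 + β) < ((1 - (α : ℂ) * z) / (1 - (β : ℂ) * z)).re := by
    rw [hre, div_lt_div_iff₀ (by linarith) hD]
    have hE : 0 < 1 + (1 - β) * x - β * (x ^ 2 + y ^ 2) := by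
      rcases le_or_gt 0 β with hb | hb
      · nlinarith [mul_le_mul_of_nonneg_left (le_of_lt hs) hb]
      · rcases le_or_gt 0 (x + (x ^ 2 + y ^ 2)) with hc | hc
        · nlinarith [mul_nonneg (neg_nonneg.2 hb.le) hc]
        · nlinarith [mul_neg_of_pos_of_neg (show (0:ℝ) < 1 + β by linarith) hc,
            mul_pos (show (0:ℝ) < 1 + x by linarith) (show (0:ℝ) < 1 + x by linarith)]
    nlinarith [mul_pos hβα hE]
  have hpos : 0 < ((1 - (α : ℂ) * z) / (1 - (β : ℂ) * z)).re := by
    have : (0:ℝ) < (1 + α) / (1 + β) := div_pos (by linarith) (by linarith)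
    linarith
  constructor
  · exact re_rpow_le_re_cpow hpos hq0 hq1
  · exact Real.rpow_lt_rpow (le_of_lt (div_pos (by linarith) (by linarith))) hkey hq0
end
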